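/- For positive semidefinite ℓ×ℓ complex matrices X and Y, tgm(X,Y) ≤ √((trace X)(trace Y)). -/

import Mathlib

/-!
With `A = √Y` and `B = √X` we have `√X·Y·√X = TᴴT` for `T = AB`, so `tgm(X,Y) = tr √(TᴴT)` is
the trace norm of `AB` and the claim is the Hölder inequality `‖AB‖₁ ≤ ‖A‖₂‖B‖₂`, since
`‖√X‖₂² = tr X`. Diagonalise `TᴴT = U diag(sᵢ²) Uᴴ`: the columns of `TU` are orthogonal with
norms `sᵢ`, so `TU = W diag(sᵢ)` for a partial isometry `W`. Then
`∑ sᵢ = tr(Wᴴ A B U) ≤ ‖AᴴW‖₂ ‖BU‖₂` by Cauchy–Schwarz for the Frobenius inner product,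
`‖BU‖₂ = ‖B‖₂`, and `‖AᴴW‖₂ ≤ ‖A‖₂` because `1 - WWᴴ` is an orthogonal projection.
-/
open Matrix
open scoped ComplexOrder

/-- The square root of a positive semidefinite matrix, as defined in Mathlib (Dec 2024). -/
noncomputable def Matrix.PosSemidef.sqrt {n : Type*} [Fintype n] [DecidableEq n] {𝕜 : Type*}
    [RCLike 𝕜] {A : Matrix n n 𝕜} (hA : A.PosSemidef) : Matrix n n 𝕜 :=
  hA.1.eigenvectorUnitary.1 * diagonal ((↑) ∘ (√·) ∘ hA.1.eigenvalues) *
  (star hA.1.eigenvectorUnitary : Matrix n n 𝕜)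

lemma Matrix.PosSemidef.posSemidef_sqrt {n : Type*} [Fintype n] [DecidableEq n] {𝕜 : Type*}
    [RCLike 𝕜] {A : Matrix n n 𝕜} (hA : A.PosSemidef) : PosSemidef hA.sqrt := by
  apply PosSemidef.mul_mul_conjTranspose_same
  refine posSemidef_diagonal_iff.mpr fun i ↦ ?_
  rw [Function.comp_apply, RCLike.nonneg_iff]
  constructor
  · simp only [Function.comp_apply, RCLike.ofReal_re]; exact Real.sqrt_nonneg _
  · simp only [Function.comp_apply, RCLike.ofReal_im]

/-- The product `√X * Y * √X` is positive semidefinite. -/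
theorem sqrt_mul_mul_sqrt_posSemidef {n : Type*} [Fintype n] [DecidableEq n]
    {X Y : Matrix n n ℂ} (hX : X.PosSemidef) (hY : Y.PosSemidef) :
    (hX.sqrt * Y * hX.sqrt).PosSemidef := by
  have h := hY.conjTranspose_mul_mul_same (B := hX.sqrt)
  rwa [hX.posSemidef_sqrt.isHermitian.eq] at h

/-- The tracial geometric mean `tgm(X,Y) = trace √(√X·Y·√X)`. -/
noncomputable def tgm {n : Type*} [Fintype n] [DecidableEq n]
    {X Y : Matrix n n ℂ} (hX : X.PosSemidef) (hY : Y.PosSemidef) : ℝ :=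
  ((sqrt_mul_mul_sqrt_posSemidef hX hY).sqrt.trace).re

namespace Matrix

variable {n : Type*} [Fintype n] [DecidableEq n] {𝕜 : Type*} [RCLike 𝕜]

lemma PosSemidef.sqrt_mul_self {A : Matrix n n 𝕜} (hA : A.PosSemidef) :
    hA.sqrt * hA.sqrt = A := by
  have hU : (star hA.1.eigenvectorUnitary : Matrix n n 𝕜) * hA.1.eigenvectorUnitary = 1 :=
    UnitaryGroup.star_mul_self _
  conv_rhs => rw [hA.1.spectral_theorem, Unitary.conjStarAlgAut_apply]
  simp only [PosSemidef.sqrt, Matrix.mul_assoc]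
  rw [← Matrix.mul_assoc (star _ : Matrix n n 𝕜) _, hU, Matrix.one_mul,
    ← Matrix.mul_assoc (diagonal _), diagonal_mul_diagonal]
  congr 3
  funext i
  simp only [Function.comp_apply]
  rw [← RCLike.ofReal_mul, Real.mul_self_sqrt (hA.eigenvalues_nonneg i)]

lemma PosSemidef.conjTranspose_sqrt_mul_sqrt {A : Matrix n n 𝕜} (hA : A.PosSemidef) :
    hA.sqrtᴴ * hA.sqrt = A := by
  rw [hA.posSemidef_sqrt.isHermitian.eq, hA.sqrt_mul_self]

lemma PosSemidef.re_trace_sqrt {A : Matrix n n 𝕜} (hA : A.PosSemidef) :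
    RCLike.re hA.sqrt.trace = ∑ i, √(hA.1.eigenvalues i) := by
  rw [PosSemidef.sqrt, trace_mul_cycle, UnitaryGroup.star_mul_self, Matrix.one_mul,
    trace_diagonal, map_sum]
  simp only [Function.comp_apply, RCLike.ofReal_re]

omit [DecidableEq n] in
lemma re_trace_mul_conjTranspose_le (x y : Matrix n n 𝕜) :
    RCLike.re (y * xᴴ).trace ≤ √(RCLike.re (x * xᴴ).trace) * √(RCLike.re (y * yᴴ).trace) := by
  classical
  let _ := toMatrixSeminormedAddCommGroup (1 : Matrix n n 𝕜) PosSemidef.one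
  let _ := toMatrixInnerProductSpace (1 : Matrix n n 𝕜) PosSemidef.one
  have h := re_inner_le_norm (𝕜 := 𝕜) x y
  rw [norm_eq_sqrt_re_inner (𝕜 := 𝕜) x, norm_eq_sqrt_re_inner (𝕜 := 𝕜) y] at h
  change RCLike.re (y * 1 * xᴴ).trace ≤
    √(RCLike.re (x * 1 * xᴴ).trace) * √(RCLike.re (y * 1 * yᴴ).trace) at h
  simpa only [Matrix.mul_one] using h

omit [DecidableEq n] in
lemma PosSemidef.trace_conjTranspose_mul_mul_le {Z W : Matrix n n 𝕜} (hZ : Z.PosSemidef)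
    (hW : W * Wᴴ * W = W) : (Wᴴ * Z * W).trace ≤ Z.trace := by
  classical
  set Q := 1 - W * Wᴴ
  have hQ : Qᴴ = Q := by simp [Q, conjTranspose_sub, conjTranspose_mul]
  have hQQ : Q * Q = Q := by
    simp only [Q, Matrix.sub_mul, Matrix.mul_sub, Matrix.one_mul, Matrix.mul_one,
      ← Matrix.mul_assoc, hW]
    abel
  have hZQ : (Z * Q).trace = (Qᴴ * Z * Q).trace := by
    rw [hQ]
    conv_lhs => rw [← hQQ, ← Matrix.mul_assoc, trace_mul_cycle]
  have hQZQ := (hZ.conjTranspose_mul_mul_same Q).trace_nonneg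
  rw [← hZQ, Matrix.mul_sub, Matrix.mul_one, trace_sub, sub_nonneg] at hQZQ
  rwa [trace_mul_cycle, trace_mul_comm]

lemma exists_partialIsometry_conjTranspose_mul_eq_diagonal {C : Matrix n n 𝕜} {s : n → ℝ}
    (hC : Cᴴ * C = diagonal fun i ↦ (s i : 𝕜) ^ 2) :
    ∃ W : Matrix n n 𝕜, W * Wᴴ * W = W ∧ Wᴴ * C = diagonal fun i ↦ (s i : 𝕜) := by
  set D : Matrix n n 𝕜 := diagonal fun i ↦ (s i : 𝕜)⁻¹
  have hD : Dᴴ = D := by simp [D, diagonal_conjTranspose]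
  -- `0⁻¹ = 0` makes the columns of `C * D` with `s i = 0` vanish, as `W * Wᴴ * W = W` requires.
  refine ⟨C * D, ?_, ?_⟩
  · rw [conjTranspose_mul, hD]
    simp only [Matrix.mul_assoc]
    rw [← Matrix.mul_assoc Cᴴ, hC]
    congr 1
    simp only [D, diagonal_mul_diagonal]
    congr 1; funext i
    grind
  · rw [conjTranspose_mul, hD, Matrix.mul_assoc, hC, diagonal_mul_diagonal]
    congr 1; funext i
    grind

omit [DecidableEq n] in
lemma re_trace_conjTranspose_mul_self_nonneg (A : Matrix n n 𝕜) :
    0 ≤ RCLike.re (Aᴴ * A).trace :=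
  (RCLike.nonneg_iff.mp (posSemidef_conjTranspose_mul_self A).trace_nonneg).1

theorem PosSemidef.re_trace_sqrt_le_of_eq_conjTranspose_mul_self {A B M : Matrix n n 𝕜}
    (hM : M.PosSemidef) (hMAB : M = (A * B)ᴴ * (A * B)) :
    RCLike.re hM.sqrt.trace ≤ √(RCLike.re (Aᴴ * A).trace * RCLike.re (Bᴴ * B).trace) := by
  subst hMAB
  have hdiag := hM.1.conjStarAlgAut_star_eigenvectorUnitary
  rw [Unitary.conjStarAlgAut_star_apply] at hdiag
  set U : Matrix n n 𝕜 := hM.1.eigenvectorUnitary.1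
  set s : n → ℝ := fun i ↦ √(hM.1.eigenvalues i)
  have hUU : U * star U = 1 := Unitary.mul_star_self_of_mem hM.1.eigenvectorUnitary.2
  have hC : (A * B * U)ᴴ * (A * B * U) = diagonal fun i ↦ (s i : 𝕜) ^ 2 := by
    have hs : (fun i ↦ (s i : 𝕜) ^ 2) = RCLike.ofReal ∘ hM.1.eigenvalues := by
      funext i
      simp only [s, Function.comp_apply, ← RCLike.ofReal_pow,
        Real.sq_sqrt (hM.eigenvalues_nonneg i)]
    rw [hs, ← hdiag, conjTranspose_mul]
    simp only [star_eq_conjTranspose, Matrix.mul_assoc]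
  obtain ⟨W, hW, hWC⟩ := exists_partialIsometry_conjTranspose_mul_eq_diagonal hC
  have hsum : ∑ i, s i = RCLike.re (B * U * (Aᴴ * W)ᴴ).trace := by
    rw [conjTranspose_mul, conjTranspose_conjTranspose, trace_mul_comm, Matrix.mul_assoc,
      ← Matrix.mul_assoc A, hWC, trace_diagonal, map_sum]
    simp only [RCLike.ofReal_re]
  have hAW : RCLike.re (Aᴴ * W * (Aᴴ * W)ᴴ).trace ≤ RCLike.re (Aᴴ * A).trace := by
    have hcompress := (posSemidef_self_mul_conjTranspose A).trace_conjTranspose_mul_mul_le hW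
    rw [conjTranspose_mul, conjTranspose_conjTranspose, trace_mul_comm, ← Matrix.mul_assoc,
      Matrix.mul_assoc Wᴴ, trace_mul_comm Aᴴ]
    exact RCLike.re_le_re hcompress
  have hBU : (B * U * (B * U)ᴴ).trace = (Bᴴ * B).trace := by
    rw [conjTranspose_mul, Matrix.mul_assoc, ← Matrix.mul_assoc U, ← star_eq_conjTranspose, hUU,
      Matrix.one_mul, trace_mul_comm]
  calc RCLike.re hM.sqrt.trace = ∑ i, s i := hM.re_trace_sqrt
    _ = RCLike.re (B * U * (Aᴴ * W)ᴴ).trace := hsum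
    _ ≤ √(RCLike.re (Aᴴ * W * (Aᴴ * W)ᴴ).trace) * √(RCLike.re (B * U * (B * U)ᴴ).trace) :=
      re_trace_mul_conjTranspose_le _ _
    _ ≤ √(RCLike.re (Aᴴ * A).trace) * √(RCLike.re (Bᴴ * B).trace) := by
      rw [hBU]; gcongr
    _ = √(RCLike.re (Aᴴ * A).trace * RCLike.re (Bᴴ * B).trace) :=
      (Real.sqrt_mul (re_trace_conjTranspose_mul_self_nonneg A) _).symm

end Matrix

/-- `tgm(X,Y) ≤ √((trace X)(trace Y))`. -/
theorem tgm_le_sqrt_trace_mul_trace {ℓ : ℕ} {X Y : Matrix (Fin ℓ) (Fin ℓ) ℂ}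
    (hX : X.PosSemidef) (hY : Y.PosSemidef) :
    tgm hX hY ≤ Real.sqrt (X.trace.re * Y.trace.re) := by
  have hfactor : hX.sqrt * Y * hX.sqrt = (hY.sqrt * hX.sqrt)ᴴ * (hY.sqrt * hX.sqrt) := by
    rw [conjTranspose_mul, hX.posSemidef_sqrt.isHermitian.eq, Matrix.mul_assoc _ hY.sqrtᴴ,
      ← Matrix.mul_assoc hY.sqrtᴴ, hY.conjTranspose_sqrt_mul_sqrt, Matrix.mul_assoc]
  have h := PosSemidef.re_trace_sqrt_le_of_eq_conjTranspose_mul_self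
    (sqrt_mul_mul_sqrt_posSemidef hX hY) hfactor
  rwa [hY.conjTranspose_sqrt_mul_sqrt, hX.conjTranspose_sqrt_mul_sqrt, mul_comm] at h
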